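/- arXiv:gr-qc/0610040 — 8 statements merged into one kernel-verified Lean document; each statement's English description precedes it below -/
import Mathlib

section
/- Suppose p̃(n) = p̃(n₀)·(n/n₀)^{Γ(n)} for n ∈ (0, n₀], where Γ: (0,n₀] → ℝ is nonincreasing and satisfies 1 < Γ_min ≤ Γ(n). Then for every n ∈ (0, n₀], n ∫₀ⁿ p̃(n')/n'² dn' ≤ p̃(n)/(Γ(n) − 1) ≤ p̃(n)/(Γ_min − 1). Consequently, with ϱ(n) = n + n ∫₀ⁿ p̃(n')/n'² dn', one has n ≥ ϱ(n) − p̃(n)/(Γ_min − 1). -/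
/-! For `t ≤ n ≤ n₀` the exponent can only grow, `Γ t ≥ Γ n`, while `t / n₀ ≤ 1`; hence
`p t ≤ p n (t / n) ^ Γ n`: the pressure lies below the polytrope of index `Γ n` through `(n, p n)`.
For that polytrope `n ∫₀ⁿ p / t²` equals `p n / (Γ n - 1)` exactly, and `Γ n ≥ Γmin` does the rest. -/

open MeasureTheory intervalIntegral Set

lemma intervalIntegral.integral_mono_of_nonneg_of_le_on_Ioc {f g : ℝ → ℝ} {a b : ℝ} (hab : a ≤ b)
    (hg : IntervalIntegrable g volume a b) (hf₀ : ∀ t ∈ Ioc a b, 0 ≤ f t)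
    (hfg : ∀ t ∈ Ioc a b, f t ≤ g t) :
    ∫ t in a..b, f t ≤ ∫ t in a..b, g t := by
  rw [integral_of_le hab, integral_of_le hab]
  exact integral_mono_of_nonneg (ae_restrict_of_forall_mem measurableSet_Ioc hf₀)
    ((intervalIntegrable_iff_integrableOn_Ioc_of_le hab).1 hg)
    (ae_restrict_of_forall_mem measurableSet_Ioc hfg)

lemma mul_integral_div_sq_le_of_le_rpow {p : ℝ → ℝ} {γ n : ℝ} (hγ : 1 < γ) (hn : 0 < n)
    (hp₀ : ∀ t ∈ Ioc 0 n, 0 ≤ p t) (hp : ∀ t ∈ Ioc 0 n, p t ≤ p n * (t / n) ^ γ) :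
    n * ∫ t in (0:ℝ)..n, p t / t ^ 2 ≤ p n / (γ - 1) := by
  set C := p n / n ^ γ
  have hbound : ∀ t ∈ Ioc 0 n, p t / t ^ 2 ≤ C * t ^ (γ - 2) := fun t ht => calc
    p t / t ^ 2 ≤ p n * (t / n) ^ γ / t ^ 2 := by gcongr; exact hp t ht
    _ = C * t ^ (γ - 2) := by
      rw [Real.div_rpow ht.1.le hn.le, Real.rpow_sub ht.1, Real.rpow_two]; ring
  have hint : ∫ t in (0:ℝ)..n, C * t ^ (γ - 2) = C * (n ^ (γ - 1) / (γ - 1)) := by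
    rw [intervalIntegral.integral_const_mul, integral_rpow (Or.inl (by linarith)),
      Real.zero_rpow (by linarith)]
    ring_nf
  calc n * ∫ t in (0:ℝ)..n, p t / t ^ 2
      ≤ n * ∫ t in (0:ℝ)..n, C * t ^ (γ - 2) := by
        gcongr
        exact integral_mono_of_nonneg_of_le_on_Ioc hn.le
          ((intervalIntegrable_rpow' (by linarith)).const_mul C)
          (fun t ht => div_nonneg (hp₀ t ht) (sq_nonneg t)) hbound
    _ = p n / (γ - 1) := by
        rw [hint, Real.rpow_sub_one hn.ne']
        simp only [C]
        field_simp

lemma le_mul_div_rpow_of_antitoneOn {p Γ : ℝ → ℝ} {n₀ t n : ℝ} (hp₀ : 0 ≤ p n₀)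
    (hΓ : AntitoneOn Γ (Ioc 0 n₀)) (heos : ∀ n ∈ Ioc 0 n₀, p n = p n₀ * (n / n₀) ^ Γ n)
    (ht : 0 < t) (htn : t ≤ n) (hn : n ≤ n₀) :
    p t ≤ p n * (t / n) ^ Γ n := by
  have hn_pos : 0 < n := ht.trans_le htn
  have hn₀ : 0 < n₀ := hn_pos.trans_le hn
  calc p t = p n₀ * (t / n₀) ^ Γ t := heos t ⟨ht, htn.trans hn⟩
    _ ≤ p n₀ * (t / n₀) ^ Γ n := by
        gcongr p n₀ * ?_
        exact Real.rpow_le_rpow_of_exponent_ge (by positivity)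
          (div_le_one_of_le₀ (htn.trans hn) hn₀.le) (hΓ ⟨ht, htn.trans hn⟩ ⟨hn_pos, hn⟩ htn)
    _ = p n₀ * (n / n₀) ^ Γ n * (t / n) ^ Γ n := by
        rw [mul_assoc, ← Real.mul_rpow (by positivity) (by positivity)]
        field_simp
    _ = p n * (t / n) ^ Γ n := by rw [heos n ⟨hn_pos, hn⟩]

theorem barotropic_nonincreasing_gamma_bound_general
    (p Γ : ℝ → ℝ) (n₀ Γmin : ℝ)
    (hp₀ : 0 < p n₀)
    (hΓmono : AntitoneOn Γ (Set.Ioc 0 n₀))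
    (hΓmin : 1 < Γmin)
    (hΓge : ∀ n ∈ Set.Ioc (0:ℝ) n₀, Γmin ≤ Γ n)
    (heos : ∀ n ∈ Set.Ioc (0:ℝ) n₀, p n = p n₀ * (n / n₀) ^ Γ n) :
    ∀ n ∈ Set.Ioc (0:ℝ) n₀,
      (n * ∫ t in (0:ℝ)..n, p t / t ^ 2) ≤ p n / (Γ n - 1) ∧
      p n / (Γ n - 1) ≤ p n / (Γmin - 1) ∧
      n ≥ (n + n * ∫ t in (0:ℝ)..n, p t / t ^ 2) - p n / (Γmin - 1) := by
  rintro n ⟨hn, hnn₀⟩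
  have hn₀ : 0 < n₀ := hn.trans_le hnn₀
  have hΓn : Γmin ≤ Γ n := hΓge n ⟨hn, hnn₀⟩
  have hp_nonneg : ∀ t ∈ Ioc 0 n, 0 ≤ p t := fun t ht => by
    rw [heos t ⟨ht.1, ht.2.trans hnn₀⟩]
    exact mul_nonneg hp₀.le (Real.rpow_nonneg (div_nonneg ht.1.le hn₀.le) _)
  have hintegral : n * ∫ t in (0:ℝ)..n, p t / t ^ 2 ≤ p n / (Γ n - 1) :=
    mul_integral_div_sq_le_of_le_rpow (hΓmin.trans_le hΓn) hn hp_nonneg fun t ht =>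
      le_mul_div_rpow_of_antitoneOn hp₀.le hΓmono heos ht.1 ht.2 hnn₀
  have hΓmin_bound : p n / (Γ n - 1) ≤ p n / (Γmin - 1) :=
    div_le_div_of_nonneg_left (hp_nonneg n ⟨hn, le_rfl⟩) (by linarith) (by linarith)
  exact ⟨hintegral, hΓmin_bound, by linarith⟩

/-- for a barotropic EOS `p̃(n) = p̃(n₀)(n/n₀)^{Γ(n)}` with nonincreasing
exponent `Γ` bounded below by `Γmin > 1`, the integral term in the energy density is
bounded: `n ∫₀ⁿ p̃/n'² ≤ p̃(n)/(Γ(n)−1) ≤ p̃(n)/(Γmin−1)`, hence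
`n ≥ ϱ(n) − p̃(n)/(Γmin−1)` where `ϱ(n) = n + n ∫₀ⁿ p̃/n'²`. -/
theorem barotropic_nonincreasing_gamma_bound
    (p Γ : ℝ → ℝ) (n₀ Γmin : ℝ)
    (hn₀ : 0 < n₀) (hp₀ : 0 < p n₀)
    (hΓmono : AntitoneOn Γ (Set.Ioc 0 n₀))
    (hΓmin : 1 < Γmin)
    (hΓge : ∀ n ∈ Set.Ioc (0:ℝ) n₀, Γmin ≤ Γ n)
    (heos : ∀ n ∈ Set.Ioc (0:ℝ) n₀, p n = p n₀ * (n / n₀) ^ Γ n) :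
    ∀ n ∈ Set.Ioc (0:ℝ) n₀,
      (n * ∫ t in (0:ℝ)..n, p t / t ^ 2) ≤ p n / (Γ n - 1) ∧
      p n / (Γ n - 1) ≤ p n / (Γmin - 1) ∧
      n ≥ (n + n * ∫ t in (0:ℝ)..n, p t / t ^ 2) - p n / (Γmin - 1) :=
  barotropic_nonincreasing_gamma_bound_general p Γ n₀ Γmin hp₀ hΓmono hΓmin hΓge heos
end

section
/- For every m > 0 and R > 2m, the quantity Ξ(m,R) := 2m²/(R(1+√(1−2m/R))²) − m/(2(1+√(1−2m/R))) + (3R/4)(−1 + √(R/(2m))·arcsin√(2m/R)) satisfies Ξ(m,R) ≥ 3m²/(5R). -/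
lemma arcsin_lb {u : ℝ} (hu0 : 0 ≤ u) (hu1 : u < 1) :
    u + u ^ 3 / 6 + 3 * u ^ 5 / 40 ≤ Real.arcsin u := by
  set F : ℝ → ℝ := fun x => Real.arcsin x - (x + x ^ 3 / 6 + 3 * x ^ 5 / 40) with hF
  have hmono : MonotoneOn F (Set.Icc 0 u) := by
    apply monotoneOn_of_deriv_nonneg (convex_Icc 0 u)
    · exact (Real.continuous_arcsin.sub (by continuity)).continuousOn
    · intro x hx
      rw [interior_Icc] at hx
      have h1 : x ≠ -1 := by nlinarith [hx.1]
      have h2 : x ≠ 1 := by nlinarith [hx.2]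
      exact ((Real.hasDerivAt_arcsin h1 h2).sub
        (((hasDerivAt_id x).add ((hasDerivAt_pow 3 x).div_const 6)).add
          (((hasDerivAt_pow 5 x).const_mul 3).div_const 40))).differentiableAt.differentiableWithinAt
    · intro x hx
      rw [interior_Icc] at hx
      have h1 : x ≠ -1 := by nlinarith [hx.1]
      have h2 : x ≠ 1 := by nlinarith [hx.2]
      have hx2 : x ^ 2 < 1 := by nlinarith [hx.1, hx.2]
      have hder : HasDerivAt F
          (1 / Real.sqrt (1 - x ^ 2) - (1 + 3 * x ^ 2 / 6 + 3 * (5 * x ^ 4) / 40)) x :=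
        (Real.hasDerivAt_arcsin h1 h2).sub
          (((hasDerivAt_id x).add ((hasDerivAt_pow 3 x).div_const 6)).add
            (((hasDerivAt_pow 5 x).const_mul 3).div_const 40))
      rw [hder.deriv]
      set s := Real.sqrt (1 - x ^ 2) with hs
      have hs0 : 0 < s := Real.sqrt_pos.2 (by nlinarith)
      have hs2 : s ^ 2 = 1 - x ^ 2 := Real.sq_sqrt (by nlinarith)
      set p : ℝ := 1 + 3 * x ^ 2 / 6 + 3 * (5 * x ^ 4) / 40 with hp
      have hp0 : 0 < p := by positivity
      have hsp0 : 0 ≤ s * p := by positivity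
      have hsq : (s * p) ^ 2 ≤ 1 := by
        have hexp : (s * p) ^ 2 = (1 - x ^ 2) * p ^ 2 := by rw [mul_pow, hs2]
        rw [hexp, hp]
        nlinarith [sq_nonneg (x ^ 3), sq_nonneg (x ^ 4), sq_nonneg (x ^ 5)]
      have key : s * p ≤ 1 := by nlinarith [hsq, hsp0]
      have hle : p ≤ 1 / s := by
        rw [le_div_iff₀ hs0]; linarith [mul_comm s p]
      linarith
  have h0 : F 0 ≤ F u := hmono (Set.left_mem_Icc.2 hu0) (Set.right_mem_Icc.2 hu0) hu0
  simp only [hF, Real.arcsin_zero] at h0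
  norm_num at h0
  linarith [h0]

/-- the Karkowski–Malec lower bound `Ξ(m,R)` dominates the Newtonian
expression `3m²/(5R)` for all `m > 0`, `R > 2m`. -/
theorem Xi_ge_newtonian (m R : ℝ) (hm : 0 < m) (hR : 2 * m < R) :
    2 * m ^ 2 / (R * (1 + Real.sqrt (1 - 2 * m / R)) ^ 2)
      - m / (2 * (1 + Real.sqrt (1 - 2 * m / R)))
      + (3 * R / 4) *
        (-1 + Real.sqrt (R / (2 * m)) * Real.arcsin (Real.sqrt (2 * m / R)))
    ≥ 3 * m ^ 2 / (5 * R) := by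
  have hR0 : 0 < R := lt_trans (by linarith) hR
  have hx0 : 0 < 2 * m / R := by positivity
  have hx1 : 2 * m / R < 1 := (div_lt_one hR0).2 hR
  set u := Real.sqrt (2 * m / R) with hu
  have hu0 : 0 < u := Real.sqrt_pos.2 hx0
  have hu1 : u < 1 := by
    have h := Real.sqrt_lt_sqrt hx0.le hx1
    simpa using h
  have hu2 : u ^ 2 = 2 * m / R := Real.sq_sqrt hx0.le
  have hinv : Real.sqrt (R / (2 * m)) = u⁻¹ := by
    rw [hu, ← Real.sqrt_inv]
    congr 1
    rw [inv_div]
  set s := Real.sqrt (1 - 2 * m / R) with hs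
  have hs0 : 0 ≤ s := Real.sqrt_nonneg _
  have hs1 : s < 1 := by
    have h := Real.sqrt_lt_sqrt (by linarith : (0:ℝ) ≤ 1 - 2 * m / R) (show 1 - 2 * m / R < 1 by linarith)
    simpa using h
  have hs2 : s ^ 2 = 1 - 2 * m / R := Real.sq_sqrt (by linarith)
  have h1s : (0:ℝ) < 1 + s := by linarith
  have harc : u + u ^ 3 / 6 + 3 * u ^ 5 / 40 ≤ Real.arcsin u := arcsin_lb hu0.le hu1
  have hmul : 1 + u ^ 2 / 6 + 3 * u ^ 4 / 40 ≤ u⁻¹ * Real.arcsin u := by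
    have h := mul_le_mul_of_nonneg_left harc (by positivity : (0:ℝ) ≤ u⁻¹)
    calc 1 + u ^ 2 / 6 + 3 * u ^ 4 / 40
        = u⁻¹ * (u + u ^ 3 / 6 + 3 * u ^ 5 / 40) := by field_simp
      _ ≤ u⁻¹ * Real.arcsin u := h
  rw [hinv]
  have hu4 : u ^ 4 = (2 * m / R) ^ 2 := by rw [show u ^ 4 = (u ^ 2) ^ 2 by ring, hu2]
  have step : (3 * R / 4) * (-1 + (1 + u ^ 2 / 6 + 3 * u ^ 4 / 40))
      ≤ (3 * R / 4) * (-1 + u⁻¹ * Real.arcsin u) :=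
    mul_le_mul_of_nonneg_left (by linarith) (by positivity)
  have hm' : m = (1 - s ^ 2) * R / 2 := by
    rw [hs2]; field_simp; ring
  have main : 3 * m ^ 2 / (5 * R)
      ≤ 2 * m ^ 2 / (R * (1 + s) ^ 2) - m / (2 * (1 + s))
        + (3 * R / 4) * (-1 + (1 + u ^ 2 / 6 + 3 * u ^ 4 / 40)) := by
    rw [hu2, hu4, ← sub_nonneg, hm']
    have heq : 2 * ((1 - s ^ 2) * R / 2) ^ 2 / (R * (1 + s) ^ 2)
          - (1 - s ^ 2) * R / 2 / (2 * (1 + s))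
        + (3 * R / 4) * (-1 + (1 + 2 * ((1 - s ^ 2) * R / 2) / R / 6
            + 3 * (2 * ((1 - s ^ 2) * R / 2) / R) ^ 2 / 40))
        - 3 * ((1 - s ^ 2) * R / 2) ^ 2 / (5 * R)
        = 3 * R * (1 - s) ^ 3 * (3 + s) / 32 := by
      field_simp
      ring
    rw [heq]
    have h3 : (0:ℝ) ≤ (1 - s) ^ 3 := pow_nonneg (by linarith) 3
    have := mul_nonneg (mul_nonneg (mul_nonneg (by linarith : (0:ℝ) ≤ 3) hR0.le) h3)
      (by linarith : (0:ℝ) ≤ 3 + s)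
    linarith
  linarith [step, main]
end

section
/- Let x = 2m/R ∈ (0,1). Define f(x) = 2x²/(1+√(1−x))² − x/(2(1+√(1−x))) + (3/2)(−1 + arcsin(√x)/√x). Then f(x) ≥ 3x²/10, i.e., f(x) − 3x²/10 ≥ 0 for all x ∈ (0,1). -/
open Real

lemma arcsin_ge_add_cube {t : ℝ} (h0 : 0 ≤ t) (h1 : t < 1) :
    t + t ^ 3 / 6 ≤ Real.arcsin t := by
  rcases eq_or_lt_of_le h0 with h | h0
  · simp [← h]
  set F : ℝ → ℝ := fun y => Real.arcsin y - (y + y ^ 3 / 6) with hF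
  have hmono : MonotoneOn F (Set.Icc 0 t) := by
    apply monotoneOn_of_deriv_nonneg (convex_Icc 0 t)
    · exact (Real.continuous_arcsin.sub (by continuity)).continuousOn
    · intro y hy
      rw [interior_Icc] at hy
      have hy1 : y ≠ 1 := by nlinarith [hy.1, hy.2]
      have hym1 : y ≠ -1 := by nlinarith [hy.1, hy.2]
      exact ((Real.hasDerivAt_arcsin hym1 hy1).sub
        (((hasDerivAt_id y).add (((hasDerivAt_pow 3 y)).div_const 6)))).differentiableAt.differentiableWithinAt
    · intro y hy
      rw [interior_Icc] at hy
      have hy0 : 0 < y := hy.1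
      have hyt : y < 1 := lt_of_lt_of_le hy.2 h1.le
      have hy1 : y ≠ 1 := ne_of_lt hyt
      have hym1 : y ≠ -1 := by nlinarith
      have hd : HasDerivAt F (1 / Real.sqrt (1 - y ^ 2) - (1 + ↑3 * y ^ (3-1) / 6)) y := by
        exact (Real.hasDerivAt_arcsin hym1 hy1).sub
          (((hasDerivAt_id y).add (((hasDerivAt_pow 3 y)).div_const 6)))
      rw [hd.deriv]
      have hs : 0 < Real.sqrt (1 - y ^ 2) := Real.sqrt_pos.2 (by nlinarith)
      have hs2 : (Real.sqrt (1 - y ^ 2)) ^ 2 = 1 - y ^ 2 :=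
        Real.sq_sqrt (by nlinarith)
      have hsle : (1 + 3 * y ^ 2 / 6) * Real.sqrt (1 - y ^ 2) ≤ 1 := by
        nlinarith [sq_nonneg (Real.sqrt (1 - y ^ 2) - 1), sq_nonneg y, sq_nonneg (y * Real.sqrt (1 - y ^ 2)), sq_nonneg (y^2 * Real.sqrt (1 - y ^ 2))]
      have : 1 + 3 * y ^ 2 / 6 ≤ 1 / Real.sqrt (1 - y ^ 2) := by
        rw [le_div_iff₀ hs]; exact hsle
      norm_num at this ⊢
      linarith
  have h01 : (0:ℝ) ∈ Set.Icc 0 t := ⟨le_refl _, h0.le⟩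
  have ht1 : t ∈ Set.Icc (0:ℝ) t := ⟨h0.le, le_refl _⟩
  have := hmono h01 ht1 h0.le
  simp only [hF, Real.arcsin_zero] at this
  norm_num at this
  linarith

/-- dimensionless form of `Ξ ≥ 3 m_S²/(5R)`: for `x ∈ (0,1)`,
`f(x) = 2x²/(1+√(1−x))² − x/(2(1+√(1−x))) + (3/2)(−1 + arcsin(√x)/√x) ≥ 3x²/10`. -/
theorem dimensionless_Xi_ge (x : ℝ) (hx : x ∈ Set.Ioo (0:ℝ) 1) :
    2 * x ^ 2 / (1 + Real.sqrt (1 - x)) ^ 2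
      - x / (2 * (1 + Real.sqrt (1 - x)))
      + (3 / 2) * (-1 + Real.arcsin (Real.sqrt x) / Real.sqrt x)
      - 3 * x ^ 2 / 10 ≥ 0 := by
  obtain ⟨hx0, hx1⟩ := hx
  set s := Real.sqrt (1 - x) with hs
  have hs0 : 0 < s := Real.sqrt_pos.2 (by linarith)
  have hs2 : s ^ 2 = 1 - x := Real.sq_sqrt (by linarith)
  have hs1 : s < 1 := by nlinarith
  set t := Real.sqrt x with ht
  have ht0 : 0 < t := Real.sqrt_pos.2 hx0
  have ht2 : t ^ 2 = x := Real.sq_sqrt hx0.le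
  have ht1 : t < 1 := by nlinarith
  have harc : t + t ^ 3 / 6 ≤ Real.arcsin t := arcsin_ge_add_cube ht0.le ht1
  have hdiv : 1 + x / 6 ≤ Real.arcsin t / t := by
    rw [le_div_iff₀ ht0]
    calc (1 + x / 6) * t = t + t ^ 3 / 6 := by rw [← ht2]; ring
    _ ≤ Real.arcsin t := harc
  -- algebraic simplification
  have h1s : (0:ℝ) < 1 + s := by linarith
  have e1 : 2 * x ^ 2 / (1 + s) ^ 2 = 2 * (1 - s) ^ 2 := by
    have hx' : x = (1 - s) * (1 + s) := by nlinarith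
    field_simp [hx']
    rw [hx']; ring
  have e2 : x / (2 * (1 + s)) = (1 - s) / 2 := by
    have hx' : x = (1 - s) * (1 + s) := by nlinarith
    field_simp [hx']
    rw [hx']; ring
  rw [e1, e2]
  have key : 2 * (1 - s) ^ 2 - (1 - s) / 2 + (3/2) * (x / 6) - 3 * x ^ 2 / 10 ≥ 0 := by
    nlinarith [sq_nonneg (1 - s), sq_nonneg ((1-s)*(1+s)), sq_nonneg s, mul_pos hs0 hs0]
  have : (3/2 : ℝ) * (-1 + Real.arcsin t / t) ≥ (3/2) * (x/6) := by
    nlinarith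
  linarith
end

section
/- Fix Γ with 1 < Γ ≤ 5/3 and a_∞² with 0 < a_∞² < Γ − 1. Then the cubic equation 3y³ + (7 − 6Γ)y² + (Γ−1)(3Γ−5)y + a_∞²(2(Γ−1) − a_∞²) = 0 in y = a_∗² has three distinct real roots. -/
/-!
Writing `c = Γ - 1` and `b = a_∞²`, the cubic is `(c - y)² (1 + 3y) - (c - b)²`. This is negative
at `y = -1/3` and `y = c`, while at `y = b` and `y = 2c - b`, where `(c - y)² = (c - b)²`, it equals
`3y (c - b)² > 0`. The intermediate value theorem gives a root in each of the three gaps of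
`-1/3 < b < c < 2c - b`.
-/

open Set

theorem exists_three_zeros_of_sign_changes {f : ℝ → ℝ} {a b c d : ℝ}
    (hab : a ≤ b) (hbc : b ≤ c) (hcd : c ≤ d) (hf : ContinuousOn f (Icc a d))
    (ha : f a < 0) (hb : 0 < f b) (hc : f c < 0) (hd : 0 < f d) :
    ∃ x y z, x < y ∧ y < z ∧ f x = 0 ∧ f y = 0 ∧ f z = 0 := by
  obtain ⟨x, hx, hfx⟩ := intermediate_value_Ioo hab
    (hf.mono (Icc_subset_Icc le_rfl (hbc.trans hcd))) ⟨ha, hb⟩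
  obtain ⟨y, hy, hfy⟩ := intermediate_value_Ioo' hbc
    (hf.mono (Icc_subset_Icc hab hcd)) ⟨hc, hb⟩
  obtain ⟨z, hz, hfz⟩ := intermediate_value_Ioo hcd
    (hf.mono (Icc_subset_Icc (hab.trans hbc) le_rfl)) ⟨hc, hd⟩
  exact ⟨x, y, z, hx.2.trans hy.1, hy.2.trans hz.1, hfx, hfy, hfz⟩

/-- The sonic point condition `c - y = (c - b) / √(1 + 3y)` squared and cleared of denominators,
with `c = Γ - 1`, `y = a_∗²` and `b = a_∞²`. -/
def sonicResidual (c b y : ℝ) : ℝ :=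
  (c - y) ^ 2 * (1 + 3 * y) - (c - b) ^ 2

theorem sonicResidual_eq_cubic (Γ b y : ℝ) :
    sonicResidual (Γ - 1) b y =
      3 * y ^ 3 + (7 - 6 * Γ) * y ^ 2 + (Γ - 1) * (3 * Γ - 5) * y + b * (2 * (Γ - 1) - b) := by
  unfold sonicResidual
  ring

theorem continuous_sonicResidual (c b : ℝ) : Continuous (sonicResidual c b) := by
  unfold sonicResidual
  fun_prop

theorem sonicResidual_neg_one_third (c b : ℝ) : sonicResidual c b (-1 / 3) = -(c - b) ^ 2 := by
  unfold sonicResidual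
  ring

theorem sonicResidual_self (c b : ℝ) : sonicResidual c b c = -(c - b) ^ 2 := by
  unfold sonicResidual
  ring

theorem sonicResidual_of_sq_eq {c b y : ℝ} (h : (c - y) ^ 2 = (c - b) ^ 2) :
    sonicResidual c b y = 3 * y * (c - b) ^ 2 := by
  unfold sonicResidual
  rw [h]
  ring

theorem sonic_cubic_three_roots_general
    (Γ ainf2 : ℝ)
    (ha : 0 < ainf2) (ha' : ainf2 < Γ - 1) :
    ∃ y₁ y₂ y₃ : ℝ, y₁ ≠ y₂ ∧ y₁ ≠ y₃ ∧ y₂ ≠ y₃ ∧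
      (∀ y ∈ ({y₁, y₂, y₃} : Set ℝ),
        3 * y ^ 3 + (7 - 6 * Γ) * y ^ 2 + (Γ - 1) * (3 * Γ - 5) * y +
          ainf2 * (2 * (Γ - 1) - ainf2) = 0) := by
  set c := Γ - 1
  have hgap : 0 < (c - ainf2) ^ 2 := by nlinarith
  have hb : 0 < sonicResidual c ainf2 ainf2 := by
    rw [sonicResidual_of_sq_eq rfl]
    positivity
  have hreflect : 0 < sonicResidual c ainf2 (2 * c - ainf2) := by
    rw [sonicResidual_of_sq_eq (by ring)]
    have : 0 < 2 * c - ainf2 := by linarith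
    positivity
  obtain ⟨y₁, y₂, y₃, h₁₂, h₂₃, hy₁, hy₂, hy₃⟩ := exists_three_zeros_of_sign_changes
    (a := -1 / 3) (by linarith) ha'.le (by linarith) (continuous_sonicResidual c ainf2).continuousOn
    (by rw [sonicResidual_neg_one_third]; linarith) hb
    (by rw [sonicResidual_self]; linarith) hreflect
  refine ⟨y₁, y₂, y₃, h₁₂.ne, (h₁₂.trans h₂₃).ne, h₂₃.ne, ?_⟩
  rintro y (rfl | rfl | rfl) <;> rwa [← sonicResidual_eq_cubic]

/-- for `1 < Γ ≤ 5/3` and `0 < a_∞² < Γ − 1`, the cubic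
`3y³ + (7−6Γ)y² + (Γ−1)(3Γ−5)y + a_∞²(2(Γ−1) − a_∞²) = 0` has three distinct
real roots. -/
theorem sonic_cubic_three_roots
    (Γ ainf2 : ℝ) (hΓ : 1 < Γ) (hΓ' : Γ ≤ 5 / 3)
    (ha : 0 < ainf2) (ha' : ainf2 < Γ - 1) :
    ∃ y₁ y₂ y₃ : ℝ, y₁ ≠ y₂ ∧ y₁ ≠ y₃ ∧ y₂ ≠ y₃ ∧
      (∀ y ∈ ({y₁, y₂, y₃} : Set ℝ),
        3 * y ^ 3 + (7 - 6 * Γ) * y ^ 2 + (Γ - 1) * (3 * Γ - 5) * y +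
          ainf2 * (2 * (Γ - 1) - ainf2) = 0) :=
  sonic_cubic_three_roots_general Γ ainf2 ha ha'
end

section
/- Fix Γ with 1 < Γ ≤ 5/3 and a_∞² ∈ (0, Γ−1). Then the equation Γ − 1 − y = (Γ − 1 − a_∞²)/√(1+3y) has a unique solution y = a_∗² in the interval (0, Γ−1), and this solution satisfies 0 < a_∗² < 1. -/
/-- for `1 < Γ ≤ 5/3` and `a_∞² ∈ (0, Γ−1)`, the sonic point
equation `Γ − 1 − y = (Γ − 1 − a_∞²)/√(1+3y)` has a unique solution
`y = a_∗²` in `(0, Γ−1)`, and this solution satisfies `0 < a_∗² < 1`. -/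
theorem sonic_point_unique
    (Γ ainf2 : ℝ) (hΓ : 1 < Γ) (hΓ' : Γ ≤ 5 / 3)
    (ha : 0 < ainf2) (ha' : ainf2 < Γ - 1) :
    (∃! y : ℝ, y ∈ Set.Ioo (0:ℝ) (Γ - 1) ∧
        Γ - 1 - y = (Γ - 1 - ainf2) / Real.sqrt (1 + 3 * y)) ∧
    (∀ y : ℝ, y ∈ Set.Ioo (0:ℝ) (Γ - 1) ∧
        Γ - 1 - y = (Γ - 1 - ainf2) / Real.sqrt (1 + 3 * y) →
      0 < y ∧ y < 1) := by
  have hΓ1 : (0:ℝ) < Γ - 1 := by linarith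
  set c : ℝ := Γ - 1 - ainf2 with hc
  have hc0 : 0 < c := by simp only [hc]; linarith
  have hcΓ : c < Γ - 1 := by simp only [hc]; linarith
  set f : ℝ → ℝ := fun y => (Γ - 1 - y) * Real.sqrt (1 + 3 * y) with hf
  -- positivity of the sqrt argument on the relevant range
  have hsq : ∀ y : ℝ, 0 ≤ y → 0 < Real.sqrt (1 + 3 * y) := by
    intro y hy
    apply Real.sqrt_pos.mpr; linarith
  -- continuity
  have hcont : ContinuousOn f (Set.Icc 0 (Γ - 1)) := by
    apply ContinuousOn.mul (by fun_prop)
    exact (Real.continuous_sqrt.comp (by continuity)).continuousOn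
  -- derivative and strict antitonicity
  have hanti : StrictAntiOn f (Set.Icc 0 (Γ - 1)) := by
    apply strictAntiOn_of_deriv_neg (convex_Icc _ _) hcont
    intro y hy
    rw [interior_Icc] at hy
    obtain ⟨hy0, hy1⟩ := hy
    have hs : (0:ℝ) < 1 + 3 * y := by linarith
    have hss : 0 < Real.sqrt (1 + 3 * y) := Real.sqrt_pos.mpr hs
    have hne : (1 + 3 * y) ≠ 0 := ne_of_gt hs
    have hd1 : HasDerivAt (fun z : ℝ => 1 + 3 * z) 3 y := by
      simpa using (hasDerivAt_id y).const_mul (3:ℝ) |>.const_add 1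
    have hd2 : HasDerivAt (fun z : ℝ => Real.sqrt (1 + 3 * z))
        (3 / (2 * Real.sqrt (1 + 3 * y))) y := by
      have h := (Real.hasDerivAt_sqrt hne).comp y hd1
      rw [show (3 / (2 * Real.sqrt (1 + 3 * y))) = 1 / (2 * Real.sqrt (1 + 3 * y)) * 3 by ring]
      exact h
    have hd3 : HasDerivAt (fun z : ℝ => Γ - 1 - z) (-1) y := by
      simpa using (hasDerivAt_id y).const_sub (Γ - 1)
    have hd : HasDerivAt f
        ((-1) * Real.sqrt (1 + 3 * y) + (Γ - 1 - y) * (3 / (2 * Real.sqrt (1 + 3 * y)))) y :=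
      hd3.mul hd2
    rw [hd.deriv]
    have hsq2 : Real.sqrt (1 + 3 * y) * Real.sqrt (1 + 3 * y) = 1 + 3 * y :=
      Real.mul_self_sqrt (le_of_lt hs)
    have key : (Γ - 1 - y) * (3 / (2 * Real.sqrt (1 + 3 * y))) < Real.sqrt (1 + 3 * y) := by
      rw [mul_div_assoc', div_lt_iff₀ (by positivity)]
      nlinarith [hsq2, hss]
    linarith [key]
  -- the equation on Ioo is equivalent to f y = c
  have hequiv : ∀ y ∈ Set.Ioo (0:ℝ) (Γ - 1),
      (Γ - 1 - y = c / Real.sqrt (1 + 3 * y) ↔ f y = c) := by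
    intro y hy
    have hss := hsq y (le_of_lt hy.1)
    rw [eq_div_iff (ne_of_gt hss)]
  -- existence via IVT
  have hf0 : f 0 = Γ - 1 := by simp [hf]
  have hf1 : f (Γ - 1) = 0 := by simp [hf]
  have hmem : c ∈ Set.Ioo (f (Γ - 1)) (f 0) := by
    rw [hf0, hf1]; exact ⟨hc0, hcΓ⟩
  have hivt := intermediate_value_Ioo' (le_of_lt hΓ1) hcont hmem
  obtain ⟨y₀, hy₀, hfy₀⟩ := hivt
  refine ⟨⟨y₀, ⟨hy₀, (hequiv y₀ hy₀).mpr hfy₀⟩, ?_⟩, ?_⟩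
  · rintro z ⟨hz, hzeq⟩
    have hfz : f z = c := (hequiv z hz).mp hzeq
    have hzI : z ∈ Set.Icc (0:ℝ) (Γ - 1) := Set.mem_Icc_of_Ioo hz
    have hy₀I : y₀ ∈ Set.Icc (0:ℝ) (Γ - 1) := Set.mem_Icc_of_Ioo hy₀
    exact hanti.injOn hzI hy₀I (by rw [hfz, hfy₀])
  · rintro y ⟨hy, -⟩
    exact ⟨hy.1, by linarith [hy.2]⟩
end

section
/- Let 1 < Γ ≤ 5/3 and K > 0, with p̃(n) = Knᴳ and a²(n) = (Γ−1)ξ/(1+ξ), ξ = ΓKn^{Γ−1}/(Γ−1). Then n·d(ln a²)/dn = (Γ−1)/(1+ξ) < 2(a² + 1/3), i.e., the condition n (d/dn) ln a² < 2(a² + 1/3) from the existence theorem holds for the p̃–n polytrope whenever Γ ≤ 5/3. -/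
/-- for the p̃–n polytrope with `a²(n) = (Γ−1)ξ(n)/(1+ξ(n))`,
`ξ(n) = ΓK n^{Γ−1}/(Γ−1)`, one has `n (ln a²)' = (Γ−1)/(1+ξ) < 2(a² + 1/3)`
whenever `1 < Γ ≤ 5/3`. -/
theorem polytrope_existence_condition
    (K Γ : ℝ) (hK : 0 < K) (hΓ : 1 < Γ) (hΓ' : Γ ≤ 5 / 3)
    (ξ a2 : ℝ → ℝ)
    (hξ : ∀ n, ξ n = Γ * K * n ^ (Γ - 1) / (Γ - 1))
    (ha2 : ∀ n, a2 n = (Γ - 1) * ξ n / (1 + ξ n)) :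
    ∀ n > (0:ℝ),
      HasDerivAt (fun x => Real.log (a2 x)) ((Γ - 1) / (1 + ξ n) / n) n ∧
      (Γ - 1) / (1 + ξ n) < 2 * (a2 n + 1 / 3) := by
  intro n hn
  have hΓ1 : (0:ℝ) < Γ - 1 := by linarith
  set c : ℝ := Γ * K / (Γ - 1) with hc
  have hcpos : 0 < c := by
    apply div_pos (by nlinarith) hΓ1
  have hξc : ∀ x, ξ x = c * x ^ (Γ - 1) := by
    intro x; rw [hξ x, hc]; ring
  have hξpos : ∀ x : ℝ, 0 < x → 0 < ξ x := by
    intro x hx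
    rw [hξc]
    exact mul_pos hcpos (Real.rpow_pos_of_pos hx _)
  have hξn := hξpos n hn
  have h1ξ : 0 < 1 + ξ n := by linarith
  constructor
  · -- derivative
    -- derivative of ξ at n
    have hdξ : HasDerivAt ξ ((Γ - 1) * ξ n / n) n := by
      have h := (Real.hasDerivAt_rpow_const (x := n) (p := Γ - 1)
        (Or.inl hn.ne')).const_mul c
      have : c * ((Γ - 1) * n ^ (Γ - 1 - 1)) = (Γ - 1) * ξ n / n := by
        rw [hξc]
        rw [show Γ - 1 - 1 = (Γ - 1) + (-1) by ring, Real.rpow_add hn,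
          Real.rpow_neg_one]
        field_simp
      rw [this] at h
      exact h.congr_of_eventuallyEq (Filter.Eventually.of_forall hξc)
    have hf : HasDerivAt (fun x => Real.log (Γ - 1) + Real.log (ξ x)
        - Real.log (1 + ξ x)) ((Γ - 1) / (1 + ξ n) / n) n := by
      have hlξ : HasDerivAt (fun x => Real.log (ξ x))
          ((Γ - 1) * ξ n / n / ξ n) n := hdξ.log hξn.ne'
      have hl1ξ : HasDerivAt (fun x => Real.log (1 + ξ x))
          ((Γ - 1) * ξ n / n / (1 + ξ n)) n := by
        simpa using ((hasDerivAt_const n (1:ℝ)).add hdξ).log h1ξ.ne'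
      have := ((hasDerivAt_const n (Real.log (Γ - 1))).add hlξ).sub hl1ξ
      refine this.congr_deriv ?_
      field_simp [hn.ne', hξn.ne', h1ξ.ne']
      ring
    refine hf.congr_of_eventuallyEq ?_
    have hmem : Set.Ioi (0:ℝ) ∈ nhds n := Ioi_mem_nhds hn
    filter_upwards [hmem] with x hx
    have hξx := hξpos x hx
    have h1x : (0:ℝ) < 1 + ξ x := by linarith
    rw [ha2 x, Real.log_div (by positivity) h1x.ne',
      Real.log_mul hΓ1.ne' hξx.ne']
  · -- inequality
    rw [ha2 n, div_lt_iff₀ h1ξ]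
    have : 2 * ((Γ - 1) * ξ n / (1 + ξ n) + 1 / 3) * (1 + ξ n)
        = 2 * (Γ - 1) * ξ n + 2 / 3 * (1 + ξ n) := by
      field_simp
    rw [this]
    nlinarith [mul_pos hΓ1 hξn]
end

section
/- For 1 < Γ ≤ Γ' ≤ 5/3 and fixed a_∞² ∈ (0, Γ−1), let y(Γ) denote the unique solution in (0, Γ−1) of (Γ − 1 − y) = (Γ − 1 − a_∞²)/√(1+3y). Then y(Γ) is nondecreasing in Γ, i.e., if Γ ≤ Γ' then y(Γ) ≤ y(Γ'). -/
/-- the sonic-point squared sound speed is nondecreasing in the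
polytropic exponent: if `1 < Γ ≤ Γ' ≤ 5/3`, `a_∞² ∈ (0, Γ−1)`, and `y`, `y'`
solve the respective sonic point equations in `(0, Γ−1)`, `(0, Γ'−1)`, then
`y ≤ y'`. -/
theorem sonic_speed_monotone_in_gamma
    (Γ Γ' ainf2 y y' : ℝ)
    (hΓ : 1 < Γ) (hΓΓ' : Γ ≤ Γ') (hΓ' : Γ' ≤ 5 / 3)
    (ha : 0 < ainf2) (ha' : ainf2 < Γ - 1)
    (hy : y ∈ Set.Ioo (0:ℝ) (Γ - 1))
    (hy' : y' ∈ Set.Ioo (0:ℝ) (Γ' - 1))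
    (heq : Γ - 1 - y = (Γ - 1 - ainf2) / Real.sqrt (1 + 3 * y))
    (heq' : Γ' - 1 - y' = (Γ' - 1 - ainf2) / Real.sqrt (1 + 3 * y')) :
    y ≤ y' := by
  obtain ⟨hy0, hyΓ⟩ := hy
  obtain ⟨hy'0, hy'Γ⟩ := hy'
  set s := Real.sqrt (1 + 3 * y) with hs
  set t := Real.sqrt (1 + 3 * y') with ht
  have hs2 : s ^ 2 = 1 + 3 * y := Real.sq_sqrt (by linarith)
  have ht2 : t ^ 2 = 1 + 3 * y' := Real.sq_sqrt (by linarith)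
  have hs0 : 0 ≤ s := Real.sqrt_nonneg _
  have ht0 : 0 ≤ t := Real.sqrt_nonneg _
  have hs1 : 1 < s := by nlinarith [hs2, hs0]
  have ht1 : 1 < t := by nlinarith [ht2, ht0]
  have hE1 : (Γ - 1 - y) * s = Γ - 1 - ainf2 := by
    rw [heq]; field_simp
  have hE2 : (Γ' - 1 - y') * t = Γ' - 1 - ainf2 := by
    rw [heq']; field_simp
  -- (Γ-1)(s-1) = (s³-s)/3 - ainf2, similarly for t
  have hA : (Γ - 1) * (s - 1) = (s ^ 3 - s) / 3 - ainf2 := by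
    have : y = (s ^ 2 - 1) / 3 := by linarith
    rw [this] at hE1; linear_combination hE1
  have hB : (Γ' - 1) * (t - 1) = (t ^ 3 - t) / 3 - ainf2 := by
    have : y' = (t ^ 2 - 1) / 3 := by linarith
    rw [this] at hE2; linear_combination hE2
  by_contra hcon
  push_neg at hcon
  have hts : t < s := Real.sqrt_lt_sqrt (by linarith) (by linarith)
  have h1 : (Γ - 1) * (s - 1) ≤ (Γ' - 1) * (s - 1) :=
    mul_le_mul_of_nonneg_right (by linarith) (by linarith)
  have h2 : (Γ - 1) * (s - 1) * (t - 1) ≤ (Γ' - 1) * (s - 1) * (t - 1) :=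
    mul_le_mul_of_nonneg_right h1 (by linarith)
  have key : ((s ^ 3 - s) / 3 - ainf2) * (t - 1) ≤ ((t ^ 3 - t) / 3 - ainf2) * (s - 1) := by
    calc ((s ^ 3 - s) / 3 - ainf2) * (t - 1) = (Γ - 1) * (s - 1) * (t - 1) := by rw [hA]
      _ ≤ (Γ' - 1) * (s - 1) * (t - 1) := h2
      _ = (Γ' - 1) * (t - 1) * (s - 1) := by ring
      _ = ((t ^ 3 - t) / 3 - ainf2) * (s - 1) := by rw [hB]
  have hid : ((t ^ 3 - t) / 3 - ainf2) * (s - 1) - ((s ^ 3 - s) / 3 - ainf2) * (t - 1)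
      = (t - s) * ((s - 1) * (t - 1) * (s + t + 1) / 3 + ainf2) := by ring
  have hbr : 0 < (s - 1) * (t - 1) * (s + t + 1) / 3 + ainf2 := by
    have := mul_pos (mul_pos (sub_pos.mpr hs1) (sub_pos.mpr ht1)) (show (0:ℝ) < s + t + 1 by linarith)
    linarith
  have hneg : (t - s) * ((s - 1) * (t - 1) * (s + t + 1) / 3 + ainf2) < 0 :=
    mul_neg_of_neg_of_pos (by linarith) hbr
  linarith
end

section
/- Suppose p̃(n) = p̃(n₊)(n/n₊)^{Γ(n,n₊)} with n ≤ n₊ and Γ(n,n₊) nonincreasing in n with 1 < Γ_min⁺ ≤ Γ(n,n₊) ≤ Γ_max⁺. Then for the energy density ϱ(n) = n + n∫₀ⁿ p̃/n'² dn' and sound speed a² = n p̃'(n)/(ϱ+p̃), the inequality Γ(n,n₊)·p̃(n)/a² ≤ ϱ(n) + p̃(n) holds pointwise (whenever a² > 0), and symmetrically ϱ + p̃ ≤ Γ(n,n₋)·p̃/a² when p̃(n) = p̃(n₋)(n/n₋)^{Γ(n,n₋)} with n₋ ≤ n and Γ(n,n₋) nonincreasing. -/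
open MeasureTheory intervalIntegral

lemma aux_deriv_left (g : ℝ → ℝ) (d n : ℝ) (hn : 0 < n)
    (hd : HasDerivAt g d n) (h0 : g n = 0)
    (hle : ∀ t ∈ Set.Ioo (0:ℝ) n, g t ≤ 0) : 0 ≤ d := by
  have h1 : Filter.Tendsto (slope g n) (nhdsWithin n (Set.Iio n)) (nhds d) :=
    (hasDerivAt_iff_tendsto_slope.mp hd).mono_left
      (nhdsWithin_mono n (fun x hx => ne_of_lt hx))
  refine ge_of_tendsto h1 ?_
  filter_upwards [Ioo_mem_nhdsLT_of_mem (⟨hn, le_refl n⟩ : n ∈ Set.Ioc 0 n)] with t ht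
  have h2 : slope g n t = g t / (t - n) := by
    rw [slope_def_field, h0, sub_zero]
  rw [h2]
  rw [div_nonneg_iff]
  exact Or.inr ⟨hle t ht, by linarith [ht.2]⟩

lemma aux_deriv_right (g : ℝ → ℝ) (d n : ℝ)
    (hd : HasDerivAt g d n) (h0 : g n = 0)
    (hle : ∀ t ∈ Set.Ioo n (n + 1), g t ≤ 0) : d ≤ 0 := by
  have h1 : Filter.Tendsto (slope g n) (nhdsWithin n (Set.Ioi n)) (nhds d) :=
    (hasDerivAt_iff_tendsto_slope.mp hd).mono_left
      (nhdsWithin_mono n (fun x hx => ne_of_gt hx))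
  refine le_of_tendsto h1 ?_
  filter_upwards [Ioo_mem_nhdsGT_of_mem (⟨le_refl n, by linarith⟩ : n ∈ Set.Ico n (n + 1))] with t ht
  have h2 : slope g n t = g t / (t - n) := by
    rw [slope_def_field, h0, sub_zero]
  rw [h2]
  exact div_nonpos_of_nonpos_of_nonneg (hle t ht) (by linarith [ht.1])

/-- for a barotropic EOS written with nonincreasing exponents
relative to reference densities `n₋ ≤ n ≤ n₊`, the combination `ϱ + p̃` is
pinched between `Γ(n,n₊) p̃/a²` and `Γ(n,n₋) p̃/a²`, where
`a² = n p̃'(n)/(ϱ + p̃)`. -/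
theorem barotropic_rho_plus_p_bounds
    (p Γp Γm : ℝ → ℝ) (nm np n p' : ℝ)
    (hnm : 0 < nm) (hn : nm ≤ n) (hnp : n ≤ np)
    (hppos : ∀ t > (0:ℝ), 0 < p t)
    (hΓp_anti : AntitoneOn Γp (Set.Ioc 0 np))
    (hΓm_anti : AntitoneOn Γm (Set.Ici nm))
    (hΓp_bound : ∀ t ∈ Set.Ioc (0:ℝ) np, 1 < Γp t)
    (hΓm_bound : ∀ t ∈ Set.Ici nm, 1 < Γm t)
    (heosp : ∀ t ∈ Set.Ioc (0:ℝ) np, p t = p np * (t / np) ^ Γp t)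
    (heosm : ∀ t ∈ Set.Ici nm, p t = p nm * (t / nm) ^ Γm t)
    (hderiv : HasDerivAt p p' n)
    (ϱ : ℝ → ℝ)
    (hϱ : ∀ x, ϱ x = x + x * ∫ t in (0:ℝ)..x, p t / t ^ 2)
    (hpos : 0 < ϱ n + p n)
    (a2 : ℝ) (ha2 : a2 = n * p' / (ϱ n + p n)) (ha2pos : 0 < a2) :
    Γp n * p n / a2 ≤ ϱ n + p n ∧ ϱ n + p n ≤ Γm n * p n / a2 := by
  have hn0 : 0 < n := lt_of_lt_of_le hnm hn
  have hnp0 : 0 < np := lt_of_lt_of_le hn0 hnp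
  have hnIoc : n ∈ Set.Ioc (0:ℝ) np := ⟨hn0, hnp⟩
  have hnIci : n ∈ Set.Ici nm := hn
  have hq : 0 < p np := hppos np hnp0
  have hqm : 0 < p nm := hppos nm hnm
  have hpn : 0 < p n := hppos n hn0
  -- frozen exponent derivative (plus side)
  have hbasep : HasDerivAt (fun t : ℝ => t / np) (1 / np) n := (hasDerivAt_id n).div_const np
  have hfp : HasDerivAt (fun t : ℝ => p np * (t / np) ^ Γp n)
      (p np * (1 / np * Γp n * (n / np) ^ (Γp n - 1))) n :=
    (hbasep.rpow_const (Or.inl (by positivity))).const_mul (p np)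
  have hvalp : p np * (1 / np * Γp n * (n / np) ^ (Γp n - 1)) = Γp n * p n / n := by
    rw [heosp n hnIoc, Real.rpow_sub (by positivity), Real.rpow_one]
    field_simp
  -- frozen exponent derivative (minus side)
  have hbasem : HasDerivAt (fun t : ℝ => t / nm) (1 / nm) n := (hasDerivAt_id n).div_const nm
  have hfm : HasDerivAt (fun t : ℝ => p nm * (t / nm) ^ Γm n)
      (p nm * (1 / nm * Γm n * (n / nm) ^ (Γm n - 1))) n :=
    (hbasem.rpow_const (Or.inl (by positivity))).const_mul (p nm)
  have hvalm : p nm * (1 / nm * Γm n * (n / nm) ^ (Γm n - 1)) = Γm n * p n / n := by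
    rw [heosm n hnIci, Real.rpow_sub (by positivity), Real.rpow_one]
    field_simp
  -- left bound: Γp n * p n / n ≤ p'
  have h_left : Γp n * p n / n ≤ p' := by
    have hg : HasDerivAt (fun t => p t - p np * (t / np) ^ Γp n)
        (p' - p np * (1 / np * Γp n * (n / np) ^ (Γp n - 1))) n := hderiv.sub hfp
    have h0 : p n - p np * (n / np) ^ Γp n = 0 := by rw [heosp n hnIoc]; ring
    have hle : ∀ t ∈ Set.Ioo (0:ℝ) n, p t - p np * (t / np) ^ Γp n ≤ 0 := by
      intro t ht
      have htIoc : t ∈ Set.Ioc (0:ℝ) np := ⟨ht.1, le_trans (le_of_lt ht.2) hnp⟩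
      rw [heosp t htIoc, sub_nonpos]
      have hb0 : 0 < t / np := div_pos ht.1 hnp0
      have hb1 : t / np ≤ 1 := (div_le_one hnp0).mpr htIoc.2
      have hexp : Γp n ≤ Γp t := hΓp_anti htIoc hnIoc (le_of_lt ht.2)
      exact mul_le_mul_of_nonneg_left
        (Real.rpow_le_rpow_of_exponent_ge hb0 hb1 hexp) (le_of_lt hq)
    have h1 := aux_deriv_left _ _ n hn0 hg h0 hle
    have h2 : p np * (1 / np * Γp n * (n / np) ^ (Γp n - 1)) ≤ p' := by linarith
    rwa [hvalp] at h2
  -- right bound: p' ≤ Γm n * p n / n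
  have h_right : p' ≤ Γm n * p n / n := by
    have hg : HasDerivAt (fun t => p t - p nm * (t / nm) ^ Γm n)
        (p' - p nm * (1 / nm * Γm n * (n / nm) ^ (Γm n - 1))) n := hderiv.sub hfm
    have h0 : p n - p nm * (n / nm) ^ Γm n = 0 := by rw [heosm n hnIci]; ring
    have hle : ∀ t ∈ Set.Ioo n (n + 1), p t - p nm * (t / nm) ^ Γm n ≤ 0 := by
      intro t ht
      have htIci : t ∈ Set.Ici nm := le_trans hn (le_of_lt ht.1)
      rw [heosm t htIci, sub_nonpos]
      have hb1 : (1:ℝ) ≤ t / nm := (one_le_div hnm).mpr htIci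
      have hexp : Γm t ≤ Γm n := hΓm_anti hnIci htIci (le_of_lt ht.1)
      exact mul_le_mul_of_nonneg_left
        (Real.rpow_le_rpow_of_exponent_le hb1 hexp) (le_of_lt hqm)
    have h1 := aux_deriv_right _ _ n hg h0 hle
    have h2 : p' ≤ p nm * (1 / nm * Γm n * (n / nm) ^ (Γm n - 1)) := by linarith
    rwa [hvalm] at h2
  have key1 : Γp n * p n ≤ n * p' := by
    have := (div_le_iff₀ hn0).mp h_left
    linarith
  have key2 : n * p' ≤ Γm n * p n := by
    have := (le_div_iff₀ hn0).mp h_right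
    linarith
  have hmul : (ϱ n + p n) * a2 = n * p' := by
    rw [ha2]; field_simp
  constructor
  · rw [div_le_iff₀ ha2pos, hmul]; exact key1
  · rw [le_div_iff₀ ha2pos, hmul]; exact key2
end
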